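/- For d ≥ 1, the functions φ(t,x) = ‖x‖²/2 − d·t and ρ(t,x) = (2π)^{−d/2} exp(−‖x‖²/2) on [0,1] × ℝ^d satisfy the Fokker–Planck equation ∂_t ρ − Δρ − div(ρ ∇φ) = 0. -/

import Mathlib

/-!
The Gaussian `ρ` does not depend on time, and its gradient is `∇ρ(x) = -ρ(x) x = -ρ(x) ∇φ(x)`:
the flux `∇ρ + ρ ∇φ` vanishes identically. Writing the Laplacian as the divergence of the
gradient, `Δρ + div (ρ ∇φ) = div (∇ρ + ρ ∇φ) = 0`.
-/

open scoped BigOperators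

/-- Coordinate-wise Laplacian on Euclidean space. -/
noncomputable def lap (d : ℕ) (f : EuclideanSpace ℝ (Fin d) → ℝ)
    (x : EuclideanSpace ℝ (Fin d)) : ℝ :=
  ∑ i, fderiv ℝ (fun y => fderiv ℝ f y (EuclideanSpace.single i 1)) x
    (EuclideanSpace.single i 1)

/-- Coordinate-wise divergence of a vector field on Euclidean space. -/
noncomputable def dvg (d : ℕ)
    (F : EuclideanSpace ℝ (Fin d) → EuclideanSpace ℝ (Fin d))
    (x : EuclideanSpace ℝ (Fin d)) : ℝ :=
  ∑ i, fderiv ℝ F x (EuclideanSpace.single i 1) i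

open Real InnerProductSpace Gradient

section Gaussian

variable {E : Type*} [NormedAddCommGroup E] [InnerProductSpace ℝ E] [CompleteSpace E]

theorem hasGradientAt_norm_sq_div_two (x : E) : HasGradientAt (fun y : E => ‖y‖ ^ 2 / 2) x x := by
  rw [hasGradientAt_iff_hasFDerivAt]
  have h := (hasStrictFDerivAt_norm_sq x).hasFDerivAt.mul_const (1 / 2 : ℝ)
  simp only [mul_one_div] at h
  exact h.congr_fderiv (by ext v; simp)

theorem gradient_norm_sq_div_two_sub (a : ℝ) : ∇ (fun y : E => ‖y‖ ^ 2 / 2 - a) = id :=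
  gradient_eq fun x => by
    simpa [hasGradientAt_iff_hasFDerivAt] using
      (hasGradientAt_norm_sq_div_two x).hasFDerivAt.sub_const a

theorem hasGradientAt_gaussian (c : ℝ) (x : E) :
    HasGradientAt (fun y : E => c * exp (-‖y‖ ^ 2 / 2)) (-(c * exp (-‖x‖ ^ 2 / 2)) • x) x := by
  rw [hasGradientAt_iff_hasFDerivAt]
  have h := (hasGradientAt_norm_sq_div_two x).hasFDerivAt.fun_neg.exp.const_mul c
  simp only [neg_div]
  exact h.congr_fderiv (by ext v; simp [mul_assoc])

theorem gradient_gaussian (c : ℝ) :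
    ∇ (fun y : E => c * exp (-‖y‖ ^ 2 / 2)) = fun x => -(c * exp (-‖x‖ ^ 2 / 2)) • x :=
  gradient_eq (hasGradientAt_gaussian c)

theorem differentiable_gradient_gaussian (c : ℝ) :
    Differentiable ℝ (∇ fun y : E => c * exp (-‖y‖ ^ 2 / 2)) := by
  have := (contDiff_norm_sq ℝ (E := E) (n := 1)).differentiable one_ne_zero
  rw [gradient_gaussian]
  fun_prop

end Gaussian

section Euclidean

variable {d : ℕ}

theorem fderiv_apply_single_eq_gradient_apply (f : EuclideanSpace ℝ (Fin d) → ℝ)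
    (y : EuclideanSpace ℝ (Fin d)) (i : Fin d) :
    fderiv ℝ f y (EuclideanSpace.single i 1) = ∇ f y i := by
  rw [← inner_gradient_left, EuclideanSpace.inner_single_right]
  simp

theorem lap_eq_dvg_gradient {f : EuclideanSpace ℝ (Fin d) → ℝ} {x : EuclideanSpace ℝ (Fin d)}
    (hf : DifferentiableAt ℝ (∇ f) x) : lap d f x = dvg d (∇ f) x := by
  refine Finset.sum_congr rfl fun i _ => ?_
  have hproj : HasFDerivAt (fun y => ∇ f y i)
      ((EuclideanSpace.proj i).comp (fderiv ℝ (∇ f) x)) x :=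
    (EuclideanSpace.proj (𝕜 := ℝ) i).hasFDerivAt.comp x hf.hasFDerivAt
  rw [funext (fderiv_apply_single_eq_gradient_apply f · i), hproj.fderiv]
  rfl

theorem dvg_neg (F : EuclideanSpace ℝ (Fin d) → EuclideanSpace ℝ (Fin d))
    (x : EuclideanSpace ℝ (Fin d)) : dvg d (-F) x = -dvg d F x := by
  simp [dvg, fderiv_neg]

end Euclidean

theorem stmt7_general (d : ℕ)
    (φ ρ : ℝ → EuclideanSpace ℝ (Fin d) → ℝ)
    (hφ : φ = fun t x => ‖x‖ ^ 2 / 2 - (d : ℝ) * t)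
    (hρ : ρ = fun _ x => (2 * Real.pi) ^ (-(d : ℝ) / 2) * Real.exp (-‖x‖ ^ 2 / 2)) :
    ∀ t ∈ Set.Icc (0 : ℝ) 1, ∀ x : EuclideanSpace ℝ (Fin d),
      deriv (fun s => ρ s x) t - lap d (ρ t) x
        - dvg d (fun y => ρ t y • gradient (φ t) y) x = 0 := by
  intro t _ x
  have hflux : (fun y => ρ t y • ∇ (φ t) y) = -∇ (ρ t) := by
    ext1 y
    simp [hφ, hρ, gradient_norm_sq_div_two_sub, gradient_gaussian]
  have hsmooth : DifferentiableAt ℝ (∇ (ρ t)) x := by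
    rw [hρ]
    exact (differentiable_gradient_gaussian _).differentiableAt
  rw [hflux, lap_eq_dvg_gradient hsmooth, dvg_neg, hρ, deriv_const]
  ring

/-- the explicit pair φ(t,x) = ‖x‖²/2 − d·t,
ρ(t,x) = (2π)^{−d/2}·exp(−‖x‖²/2) satisfies the Fokker–Planck equation
∂ₜρ − Δρ − div(ρ∇φ) = 0 (viscosity ν = 1). -/
theorem stmt7 (d : ℕ) (hd : 1 ≤ d)
    (φ ρ : ℝ → EuclideanSpace ℝ (Fin d) → ℝ)
    (hφ : φ = fun t x => ‖x‖ ^ 2 / 2 - (d : ℝ) * t)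
    (hρ : ρ = fun _ x => (2 * Real.pi) ^ (-(d : ℝ) / 2) * Real.exp (-‖x‖ ^ 2 / 2)) :
    ∀ t ∈ Set.Icc (0 : ℝ) 1, ∀ x : EuclideanSpace ℝ (Fin d),
      deriv (fun s => ρ s x) t - lap d (ρ t) x
        - dvg d (fun y => ρ t y • gradient (φ t) y) x = 0 :=
  stmt7_general d φ ρ hφ hρ
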